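/- Let W be a symmetric doubly stochastic N×N matrix with smallest eigenvalue λ_N(W), and φ(x) := (1/4)∑_{i,j} W_{ij}‖x_i − x_j‖_F² on St(d,r)^N. Then for all x, y ∈ St(d,r)^N, φ(y) − φ(x) − ⟨grad φ(x), y − x⟩ ≤ (L/2)‖y − x‖_F² with L = 1 − λ_N(W). -/

import Mathlib

/-!
Write `D = y - x`. The consensus energy `φ(v) = ¼ ∑ W_ij ‖v_i - v_j‖²` is a quadratic form with
Euclidean gradient `e_i = v_i - ∑_j W_ij v_j` (`W` symmetric with unit row sums), so with `e` in place
of the Riemannian gradient the left-hand side is exactly `φ(D) = ½ (∑ ‖D_i‖² - ∑ W_ij ⟨D_i, D_j⟩)`,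
which `W - λ_N I ⪰ 0` bounds by `(1 - λ_N)/2 ∑ ‖D_i‖²`.
The Riemannian gradient only lowers the left-hand side: `⟨e_i - grad_i, D_i⟩ = ½ ⟨x_i S_i, D_i⟩`
with `S_i = x_iᵀ e_i + e_iᵀ x_i = ∑_j W_ij (x_i - x_j)ᵀ (x_i - x_j) ⪰ 0`, and on the Stiefel
manifold `x_iᵀ D_i + D_iᵀ x_i = -D_iᵀ D_i`, so `⟨x_i S_i, D_i⟩ = -½ tr (S_i D_iᵀ D_i) ≤ 0`.
-/

open Matrix BigOperators Finset

noncomputable def fnorm {d r : ℕ} (A : Matrix (Fin d) (Fin r) ℝ) : ℝ :=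
  Real.sqrt (∑ i, ∑ j, (A i j) ^ 2)

def ip {d r : ℕ} (A B : Matrix (Fin d) (Fin r) ℝ) : ℝ :=
  ∑ i, ∑ j, A i j * B i j

def Stiefel (d r : ℕ) : Set (Matrix (Fin d) (Fin r) ℝ) :=
  {x | xᵀ * x = 1}

open scoped RealInnerProductSpace

namespace Matrix

variable {ι : Type*} [Fintype ι]

theorem PosSemidef.sum_mul_inner_nonneg {E : Type*} [NormedAddCommGroup E]
    [InnerProductSpace ℝ E] {M : Matrix ι ι ℝ} (hM : M.PosSemidef) (v : ι → E) :
    0 ≤ ∑ i, ∑ j, M i j * ⟪v i, v j⟫ := by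
  -- Schur product theorem: the sum is `1ᵀ (M ⊙ gram v) 1`.
  simpa [dotProduct, mulVec, Finset.mul_sum] using
    (hM.hadamard (posSemidef_gram ℝ v)).dotProduct_mulVec_nonneg (fun _ => 1)

theorem posSemidef_sub_smul_one_of_mem_lowerBounds [DecidableEq ι] {W : Matrix ι ι ℝ}
    (hW : W.IsSymm) {c : ℝ}
    (hc : c ∈ lowerBounds {t : ℝ | ∃ v : ι → ℝ, v ≠ 0 ∧ W *ᵥ v = t • v}) :
    (W - c • 1).PosSemidef := by
  have hW' : W.IsHermitian := hW
  have hsub : (W - c • 1).IsHermitian := hW.sub (isSymm_one.smul c)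
  refine posSemidef_iff_isHermitian_and_spectrum_nonneg.2 ⟨hsub, ?_⟩
  rw [← Algebra.algebraMap_eq_smul_one, ← spectrum.sub_singleton_eq, hW'.spectrum_eq_image_range]
  rintro _ ⟨_, ⟨_, ⟨i, rfl⟩, rfl⟩, _, rfl, rfl⟩
  have := hc ⟨_, fun h => hW'.eigenvectorBasis.orthonormal.ne_zero i (by simpa using h),
    hW'.mulVec_eigenvectorBasis i⟩
  simpa using this

variable {W : Matrix ι ι ℝ}

theorem sum_sum_mul_of_sum_eq_one (hrow : ∀ i, ∑ j, W i j = 1) (f : ι → ℝ) :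
    ∑ i, ∑ j, W i j * f i = ∑ i, f i := by
  simp [← Finset.sum_mul, hrow]

theorem IsSymm.sum_sum_mul_swap (hW : W.IsSymm) (f : ι → ι → ℝ) :
    ∑ i, ∑ j, W i j * f i j = ∑ i, ∑ j, W i j * f j i := by
  rw [Finset.sum_comm]
  simp only [hW.apply]

end Matrix

section ConsensusEnergy

variable {ι : Type*} [Fintype ι] {E : Type*} [NormedAddCommGroup E] [InnerProductSpace ℝ E]
  {W : Matrix ι ι ℝ}

noncomputable def consensusEnergy (W : Matrix ι ι ℝ) (v : ι → E) : ℝ :=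
  (1 / 4) * ∑ i, ∑ j, W i j * ‖v i - v j‖ ^ 2

theorem consensusEnergy_eq (hW : W.IsSymm) (hrow : ∀ i, ∑ j, W i j = 1) (v : ι → E) :
    consensusEnergy W v = (1 / 2) * (∑ i, ‖v i‖ ^ 2 - ∑ i, ∑ j, W i j * ⟪v i, v j⟫) := by
  have hleft := sum_sum_mul_of_sum_eq_one hrow (fun i => ‖v i‖ ^ 2)
  have hright := hW.sum_sum_mul_swap (fun i _ => ‖v i‖ ^ 2)
  simp only [consensusEnergy, norm_sub_sq_real, mul_add, mul_sub, Finset.sum_add_distrib,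
    Finset.sum_sub_distrib, mul_left_comm _ (2 : ℝ), ← Finset.mul_sum] at hright ⊢
  linarith

theorem consensusEnergy_sub_sub_inner (hW : W.IsSymm) (hrow : ∀ i, ∑ j, W i j = 1)
    (x y : ι → E) :
    consensusEnergy W y - consensusEnergy W x - ∑ i, ⟪x i - ∑ j, W i j • x j, y i - x i⟫
      = consensusEnergy W (y - x) := by
  obtain ⟨D, rfl⟩ : ∃ D, y = x + D := ⟨y - x, by abel⟩
  have hswap := hW.sum_sum_mul_swap (fun i j => ⟪x i, D j⟫)
  simp only [consensusEnergy_eq hW hrow, add_sub_cancel_left, Pi.add_apply, norm_add_sq_real,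
    inner_add_left, inner_add_right, inner_sub_left, sum_inner, real_inner_smul_left,
    mul_add, Finset.sum_add_distrib, Finset.sum_sub_distrib, ← Finset.mul_sum] at hswap ⊢
  simp only [real_inner_comm (x _) (D _)]
  linarith

theorem consensusEnergy_le_of_posSemidef [DecidableEq ι] (hW : W.IsSymm)
    (hrow : ∀ i, ∑ j, W i j = 1) {c : ℝ} (hc : (W - c • 1).PosSemidef) (v : ι → E) :
    consensusEnergy W v ≤ (1 - c) / 2 * ∑ i, ‖v i‖ ^ 2 := by
  have h := hc.sum_mul_inner_nonneg v
  simp only [Matrix.sub_apply, Matrix.smul_apply, one_apply, smul_eq_mul, mul_ite, mul_one,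
    mul_zero, sub_mul, ite_mul, zero_mul, Finset.sum_sub_distrib, Finset.sum_ite_eq,
    Finset.mem_univ, if_true, real_inner_self_eq_norm_sq, ← Finset.mul_sum] at h
  rw [consensusEnergy_eq hW hrow]
  linarith

end ConsensusEnergy

def Matrix.vecL2 {m n : Type*} : Matrix m n ℝ →ₗ[ℝ] EuclideanSpace ℝ (n × m) where
  toFun A := WithLp.toLp 2 A.vec
  map_add' A B := by rw [vec_add]; rfl
  map_smul' c A := by rw [vec_smul]; rfl

section Stiefel

variable {d r : ℕ}

noncomputable def projTangent (X Z : Matrix (Fin d) (Fin r) ℝ) : Matrix (Fin d) (Fin r) ℝ :=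
  Z - (1 / 2 : ℝ) • (X * (Xᵀ * Z + Zᵀ * X))

theorem ip_eq_trace (A B : Matrix (Fin d) (Fin r) ℝ) : ip A B = (Aᵀ * B).trace := by
  simp only [ip, trace, Matrix.diag, mul_apply, transpose_apply]
  exact Finset.sum_comm

theorem inner_vecL2 (A B : Matrix (Fin d) (Fin r) ℝ) : ⟪A.vecL2, B.vecL2⟫ = ip A B := by
  rw [ip_eq_trace, ← vec_dotProduct_vec, dotProduct_comm]
  rfl

theorem norm_vecL2 (A : Matrix (Fin d) (Fin r) ℝ) : ‖A.vecL2‖ = fnorm A := by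
  rw [fnorm, norm_eq_sqrt_real_inner, inner_vecL2]
  simp [ip, sq]

theorem ip_sub_left (A B C : Matrix (Fin d) (Fin r) ℝ) : ip (A - B) C = ip A C - ip B C := by
  simp [ip, sub_mul, Finset.sum_sub_distrib]

theorem ip_smul_left (c : ℝ) (A B : Matrix (Fin d) (Fin r) ℝ) : ip (c • A) B = c * ip A B := by
  simp [ip, Finset.mul_sum, mul_assoc]

theorem two_mul_ip_mul_of_isSymm {T : Matrix (Fin r) (Fin r) ℝ} (hT : T.IsSymm)
    (X D : Matrix (Fin d) (Fin r) ℝ) :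
    2 * ip (X * T) D = (T * (Xᵀ * D + Dᵀ * X)).trace := by
  have h : (T * (Dᵀ * X)).trace = (T * (Xᵀ * D)).trace := by
    rw [← trace_transpose, transpose_mul, transpose_mul, transpose_transpose, hT.eq,
      trace_mul_comm]
  rw [ip_eq_trace, Matrix.mul_add, trace_add, h, transpose_mul, hT.eq, Matrix.mul_assoc]
  ring

theorem trace_mul_transpose_mul_self_nonneg {T : Matrix (Fin r) (Fin r) ℝ}
    (hT : T.PosSemidef) (D : Matrix (Fin d) (Fin r) ℝ) : 0 ≤ (T * (Dᵀ * D)).trace := by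
  rw [← Matrix.mul_assoc, trace_mul_comm, ← Matrix.mul_assoc,
    ← conjTranspose_eq_transpose_of_trivial]
  exact (hT.mul_mul_conjTranspose_same D).trace_nonneg

theorem transpose_mul_sub_add_of_mem_stiefel {X Y : Matrix (Fin d) (Fin r) ℝ}
    (hX : X ∈ Stiefel d r) (hY : Y ∈ Stiefel d r) :
    Xᵀ * (Y - X) + (Y - X)ᵀ * X = -((Y - X)ᵀ * (Y - X)) := by
  simp only [Matrix.mul_sub, Matrix.sub_mul, transpose_sub, hX.out, hY.out]
  abel

theorem transpose_mul_add_transpose_mul_eq_sum_of_mem_stiefel {ι : Type*} [Fintype ι] {w : ι → ℝ}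
    (hw : ∑ j, w j = 1) {X : Matrix (Fin d) (Fin r) ℝ} {x : ι → Matrix (Fin d) (Fin r) ℝ}
    (hX : X ∈ Stiefel d r) (hx : ∀ j, x j ∈ Stiefel d r) :
    Xᵀ * (X - ∑ j, w j • x j) + (X - ∑ j, w j • x j)ᵀ * X
      = ∑ j, w j • ((X - x j)ᵀ * (X - x j)) := by
  simp only [Matrix.mul_sub, Matrix.sub_mul, transpose_sub, transpose_sum, transpose_smul,
    Matrix.mul_sum, Matrix.sum_mul, Matrix.mul_smul, Matrix.smul_mul, hX.out,
    fun j => (hx j).out, smul_sub, Finset.sum_sub_distrib, ← Finset.sum_smul, hw, one_smul]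
  abel

theorem ip_le_ip_projTangent {ι : Type*} [Fintype ι] {w : ι → ℝ} (hw0 : ∀ j, 0 ≤ w j)
    (hw : ∑ j, w j = 1) {X Y : Matrix (Fin d) (Fin r) ℝ} {x : ι → Matrix (Fin d) (Fin r) ℝ}
    (hX : X ∈ Stiefel d r) (hY : Y ∈ Stiefel d r) (hx : ∀ j, x j ∈ Stiefel d r) :
    ip (X - ∑ j, w j • x j) (Y - X) ≤ ip (projTangent X (X - ∑ j, w j • x j)) (Y - X) := by
  set G := X - ∑ j, w j • x j
  set T := Xᵀ * G + Gᵀ * X with hT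
  have hTpsd : T.PosSemidef := by
    rw [hT, transpose_mul_add_transpose_mul_eq_sum_of_mem_stiefel hw hX hx]
    exact posSemidef_sum _ fun j _ => (posSemidef_conjTranspose_mul_self _).smul (hw0 j)
  have hcurv : 2 * ip (X * T) (Y - X) ≤ 0 := by
    have hTsymm : T.IsSymm := hTpsd.isHermitian
    rw [two_mul_ip_mul_of_isSymm hTsymm, transpose_mul_sub_add_of_mem_stiefel hX hY,
      Matrix.mul_neg, trace_neg, neg_nonpos]
    exact trace_mul_transpose_mul_self_nonneg hTpsd _
  rw [projTangent, ← hT, ip_sub_left G, ip_smul_left]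
  linarith

end Stiefel

theorem stmt8 {N d r : ℕ} (W : Matrix (Fin N) (Fin N) ℝ)
    (hsymm : W.IsSymm) (hnn : ∀ i j, 0 ≤ W i j) (hrow : ∀ i, ∑ j, W i j = 1)
    (lamN : ℝ)
    (hlamN : IsLeast {t : ℝ | ∃ v : Fin N → ℝ, v ≠ 0 ∧ W.mulVec v = t • v} lamN)
    (x y : Fin N → Matrix (Fin d) (Fin r) ℝ)
    (hx : ∀ i, x i ∈ Stiefel d r) (hy : ∀ i, y i ∈ Stiefel d r)
    (egrad : Fin N → Matrix (Fin d) (Fin r) ℝ)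
    (hegrad : ∀ i, egrad i = x i - ∑ j, W i j • x j)
    (rgrad : Fin N → Matrix (Fin d) (Fin r) ℝ)
    (hrgrad : ∀ i, rgrad i =
      egrad i - ((1 : ℝ) / 2) • (x i * ((x i)ᵀ * egrad i + (egrad i)ᵀ * x i))) :
    (1 / 4) * (∑ i, ∑ j, W i j * fnorm (y i - y j) ^ 2)
      - (1 / 4) * (∑ i, ∑ j, W i j * fnorm (x i - x j) ^ 2)
      - ∑ i, ip (rgrad i) (y i - x i)
      ≤ ((1 - lamN) / 2) * ∑ i, fnorm (y i - x i) ^ 2 := by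
  have hgrad : ∀ i, ip (egrad i) (y i - x i) ≤ ip (rgrad i) (y i - x i) := fun i => by
    rw [hrgrad, hegrad]
    exact ip_le_ip_projTangent (hnn i) (hrow i) (hx i) (hy i) hx
  have htaylor := consensusEnergy_sub_sub_inner hsymm hrow (fun i => (x i).vecL2)
    (fun i => (y i).vecL2)
  have hbound := consensusEnergy_le_of_posSemidef hsymm hrow
    (posSemidef_sub_smul_one_of_mem_lowerBounds hsymm hlamN.2)
    (fun i => (y i).vecL2 - (x i).vecL2)
  have hinner : ∀ i, ⟪(x i).vecL2 - ∑ j, W i j • (x j).vecL2, (y i - x i).vecL2⟫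
      = ip (egrad i) (y i - x i) := fun i => by
    rw [hegrad, ← inner_vecL2]
    simp only [map_sub, map_sum, map_smul]
  simp only [consensusEnergy, Pi.sub_apply, ← map_sub, norm_vecL2, hinner] at htaylor hbound
  linarith [Finset.sum_le_sum fun i (_ : i ∈ univ) => hgrad i]
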